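/- Let S be a pomonoid and a, b ∈ S with l(a,b) = {s ∈ S : sa ≤ sb} nonempty. Then the monocyclic S-poset congruence ν(a,b) on S induced by the pair (a,b) is contained in ker λ_s for some s ∈ S; i.e., ν(a,b) is a right subannihilator congruence. -/
import Mathlib


/-- A chain `x ≤ a·w₁, b·w₁ ≤ a·w₂, …, b·wₙ ≤ y` in a pomonoid, all pairs
equal to `(a, b)`. -/
def ChainST {S : Type} [Monoid S] [PartialOrder S] (a b x y : S) : Prop :=
  ∃ n : ℕ, ∃ w : Fin (n + 1) → S,
    x ≤ a * w 0 ∧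
    (∀ i : Fin n, b * w i.castSucc ≤ a * w i.succ) ∧
    b * w (Fin.last n) ≤ y

/-- The monocyclic `S`-poset congruence `ν(a,b)` on `S` induced by `(a, b)`. -/
def NuRel {S : Type} [Monoid S] [PartialOrder S] (a b x y : S) : Prop :=
  x = y ∨ (ChainST a b x y ∧ ChainST a b y x)

lemma chain_mul_le {S : Type} [Monoid S] [PartialOrder S]
    [CovariantClass S S (· * ·) (· ≤ ·)]
    [CovariantClass S S (Function.swap (· * ·)) (· ≤ ·)]
    {a b s : S} (hs : s * a ≤ s * b) {x y : S}
    (hc : ChainST a b x y) : s * x ≤ s * y := by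
  obtain ⟨n, w, h0, hstep, hlast⟩ := hc
  have key : ∀ i : Fin (n + 1), s * x ≤ s * (a * w i) := by
    intro i
    induction i using Fin.induction with
    | zero => exact mul_le_mul_right h0 s
    | succ j ih =>
      calc s * x ≤ s * (a * w j.castSucc) := ih
        _ = s * a * w j.castSucc := (mul_assoc ..).symm
        _ ≤ s * b * w j.castSucc := mul_le_mul_left hs _
        _ = s * (b * w j.castSucc) := mul_assoc ..
        _ ≤ s * (a * w j.succ) := mul_le_mul_right (hstep j) s
  calc s * x ≤ s * (a * w (Fin.last n)) := key _
    _ = s * a * w (Fin.last n) := (mul_assoc ..).symm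
    _ ≤ s * b * w (Fin.last n) := mul_le_mul_left hs _
    _ = s * (b * w (Fin.last n)) := mul_assoc ..
    _ ≤ s * y := mul_le_mul_right hlast s

/-- if `l(a,b) = {s : sa ≤ sb}` is nonempty, then the monocyclic
congruence `ν(a,b)` is a right subannihilator congruence: `ν(a,b) ⊆ ker λ_s`
for some `s ∈ S`. -/
theorem nu_is_subannihilator
    {S : Type} [Monoid S] [PartialOrder S]
    [CovariantClass S S (· * ·) (· ≤ ·)]
    [CovariantClass S S (Function.swap (· * ·)) (· ≤ ·)]
    (a b : S) (h : ∃ s : S, s * a ≤ s * b) :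
    ∃ s : S, ∀ x y : S, NuRel a b x y → s * x = s * y := by
  obtain ⟨s, hs⟩ := h
  refine ⟨s, fun x y hxy => ?_⟩
  rcases hxy with rfl | ⟨h1, h2⟩
  · rfl
  · exact le_antisymm (chain_mul_le hs h1) (chain_mul_le hs h2)
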